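/- Let P(y) = Σ_{v∈V} P_v y_v be a linear functional with real coefficients and set ‖P‖₂ = (Σ_{v∈V} P_v²)^{1/2}. For every t ≥ 0, the occupancy process and the deterministic process started at x(0) satisfy E|P(X(t)) − P(x(t))| ≤ t·‖P‖₂ + M Σ_{s=1}^{t−1} Σ_{v∈V} |P_v| · E|X_{N_v}(s) − x_{N_v}(s)| (the double sum being empty for t ≤ 1). -/

import Mathlib

/-!
Write `P·y = ∑ v, P v * y v`. Conditionally on `X(t)`, the coordinates of `X(t+1)` are independent
Bernoulli variables with means `p = Γ(X(t))`, so by Cauchy–Schwarz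
`E|P·X(t+1) - P·p| ≤ (∑ v, P v ^ 2 * p v * (1 - p v))^{1/2} ≤ ‖P‖₂`.
Linearizing `γ` in its first argument,
`P·Γ(y) - P·Γ(x)` differs from `Q·(y - x)` by at most `M ∑ v, |P v| * |y_{N_v} - x_{N_v}|`,
where `Q v = P v * (1 - f x_{N_v} - g x_{N_v})` satisfies `|Q v| ≤ |P v|`. So the error for `P`
at time `t + 1` is controlled by the error for `Q` at time `t`, and an induction on `t`, for all
functionals at once, gives the bound. The `s = 0` term vanishes because `X(0) = x(0)`.
-/

open MeasureTheory Finset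

noncomputable section

/-- Real value of a Boolean state. -/
def b2r (b : Bool) : ℝ := if b then 1 else 0

/-- Neighborhood average `y_{N_v} = (deg v)⁻¹ ∑_{w ∈ N_v} y_w`. -/
def nbrAvg {V : Type} [Fintype V] (G : SimpleGraph V) [DecidableRel G.Adj]
    (y : V → ℝ) (v : V) : ℝ :=
  (∑ w ∈ G.neighborFinset v, y w) / (G.degree v : ℝ)

/-- `γ(a,b) = a(1 - f(b)) + (1 - a) g(b)`. -/
def gam (f g : ℝ → ℝ) (a b : ℝ) : ℝ := a * (1 - f b) + (1 - a) * g b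

/-- One-step transition measure of the occupancy process: from state `X`, the
coordinates of the next state are independent Bernoulli with success
probability `γ(X_v, X_{N_v})`; this is the corresponding product measure on
`V → Bool`, written out by its mass function. -/
def stepMeasure {V : Type} [Fintype V] [DecidableEq V] (G : SimpleGraph V)
    [DecidableRel G.Adj] (f g : ℝ → ℝ) (X : V → Bool) : Measure (V → Bool) :=
  ∑ y : V → Bool,
    ENNReal.ofReal (∏ v,
        (if y v then gam f g (b2r (X v)) (nbrAvg G (fun w => b2r (X w)) v)
         else 1 - gam f g (b2r (X v)) (nbrAvg G (fun w => b2r (X w)) v)))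
      • Measure.dirac y

/-- Law of the occupancy process at time `t`, started (a.s.) at `x0`. -/
def law {V : Type} [Fintype V] [DecidableEq V] (G : SimpleGraph V)
    [DecidableRel G.Adj] (f g : ℝ → ℝ) (x0 : V → Bool) : ℕ → Measure (V → Bool)
  | 0 => Measure.dirac x0
  | t + 1 => (law G f g x0 t).bind (stepMeasure G f g)

/-- The deterministic process `x(t+1)_v = γ(x(t)_v, x(t)_{N_v})`. -/
def det {V : Type} [Fintype V] (G : SimpleGraph V) [DecidableRel G.Adj]
    (f g : ℝ → ℝ) (x0 : V → ℝ) : ℕ → V → ℝ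
  | 0 => x0
  | t + 1 => fun v => gam f g (det G f g x0 t v) (nbrAvg G (det G f g x0 t) v)

section BernoulliProduct

variable {V : Type} [Fintype V]

def bernoulliProdMass (p : V → ℝ) (y : V → Bool) : ℝ :=
  ∏ v, if y v then p v else 1 - p v

lemma bernoulliProdMass_nonneg {p : V → ℝ} (hp : ∀ v, p v ∈ Set.Icc (0 : ℝ) 1) (y : V → Bool) :
    0 ≤ bernoulliProdMass p y :=
  prod_nonneg fun v _ => by
    obtain ⟨h0, h1⟩ := hp v
    split_ifs <;> linarith

variable [DecidableEq V]

lemma sum_bernoulliProdMass_mul_prod (p : V → ℝ) (h : V → Bool → ℝ) :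
    ∑ y, bernoulliProdMass p y * ∏ v, h v (y v)
      = ∏ v, (p v * h v true + (1 - p v) * h v false) := by
  have perCoord : ∀ v, p v * h v true + (1 - p v) * h v false
      = ∑ b : Bool, (if b then p v else 1 - p v) * h v b := fun v => by simp
  simp_rw [perCoord, Fintype.prod_sum, bernoulliProdMass, ← prod_mul_distrib]

lemma sum_bernoulliProdMass (p : V → ℝ) : ∑ y, bernoulliProdMass p y = 1 := by
  simpa using sum_bernoulliProdMass_mul_prod p fun _ _ => 1

lemma sum_bernoulliProdMass_mul_centered_mul_centered (p : V → ℝ) (v w : V) :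
    ∑ y, bernoulliProdMass p y * ((b2r (y v) - p v) * (b2r (y w) - p w))
      = if v = w then p v * (1 - p v) else 0 := by
  have key := sum_bernoulliProdMass_mul_prod p fun u b =>
    (if u = v then b2r b - p v else 1) * (if u = w then b2r b - p w else 1)
  simp only [prod_mul_distrib, prod_ite_eq', Finset.mem_univ, if_true] at key
  rw [key]
  split_ifs with hvw
  · subst hvw
    rw [prod_eq_single v (fun u _ hu => by simp [hu]) (by simp)]
    simp only [↓reduceIte, b2r, Bool.false_eq_true, zero_sub, mul_neg, neg_mul, neg_neg]
    ring
  · exact prod_eq_zero (mem_univ v) (by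
      simp only [↓reduceIte, b2r, hvw, mul_one, Bool.false_eq_true, zero_sub, mul_neg]
      ring)

lemma sum_bernoulliProdMass_mul_sq_linear (p P : V → ℝ) :
    ∑ y, bernoulliProdMass p y * (∑ v, P v * (b2r (y v) - p v)) ^ 2
      = ∑ v, P v ^ 2 * (p v * (1 - p v)) := by
  have expand : ∀ y : V → Bool, (∑ v, P v * (b2r (y v) - p v)) ^ 2
      = ∑ v, ∑ w, P v * P w * ((b2r (y v) - p v) * (b2r (y w) - p w)) := fun y => by
    rw [sq, sum_mul_sum]
    exact sum_congr rfl fun v _ => sum_congr rfl fun w _ => by ring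
  simp_rw [expand, mul_sum]
  rw [sum_comm]
  refine sum_congr rfl fun v _ => ?_
  rw [sum_comm]
  calc ∑ w, ∑ y, bernoulliProdMass p y * (P v * P w * ((b2r (y v) - p v) * (b2r (y w) - p w)))
      = ∑ w, P v * P w * (if v = w then p v * (1 - p v) else 0) :=
        sum_congr rfl fun w _ => by
          rw [← sum_bernoulliProdMass_mul_centered_mul_centered, mul_sum]
          exact sum_congr rfl fun y _ => by ring
    _ = P v ^ 2 * (p v * (1 - p v)) := by simp [sq]

lemma sum_bernoulliProdMass_mul_abs_linear_le {p : V → ℝ} (hp : ∀ v, p v ∈ Set.Icc (0 : ℝ) 1)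
    (P : V → ℝ) :
    ∑ y, bernoulliProdMass p y * |∑ v, P v * (b2r (y v) - p v)| ≤ √(∑ v, P v ^ 2) := by
  have hm := bernoulliProdMass_nonneg hp
  have cauchySchwarz : (∑ y, bernoulliProdMass p y * |∑ v, P v * (b2r (y v) - p v)|) ^ 2
      ≤ (∑ y, bernoulliProdMass p y)
        * ∑ y, bernoulliProdMass p y * (∑ v, P v * (b2r (y v) - p v)) ^ 2 :=
    sum_sq_le_sum_mul_sum_of_sq_le_mul _ (fun y _ => hm y)
      (fun y _ => mul_nonneg (hm y) (sq_nonneg _)) fun y _ => by rw [mul_pow, sq_abs]; ring_nf; rfl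
  have variance_le : ∑ v, P v ^ 2 * (p v * (1 - p v)) ≤ ∑ v, P v ^ 2 :=
    sum_le_sum fun v _ => by
      obtain ⟨h0, h1⟩ := hp v
      nlinarith [sq_nonneg (P v), mul_nonneg (sq_nonneg (P v)) h0]
  rw [sum_bernoulliProdMass, one_mul, sum_bernoulliProdMass_mul_sq_linear] at cauchySchwarz
  exact Real.le_sqrt_of_sq_le (cauchySchwarz.trans variance_le)

lemma sum_bernoulliProdMass_mul_abs_sub_le {p : V → ℝ} (hp : ∀ v, p v ∈ Set.Icc (0 : ℝ) 1)
    (P : V → ℝ) (c : ℝ) :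
    ∑ y, bernoulliProdMass p y * |∑ v, P v * b2r (y v) - c|
      ≤ √(∑ v, P v ^ 2) + |∑ v, P v * p v - c| := by
  have triangle : ∀ y : V → Bool, |∑ v, P v * b2r (y v) - c|
      ≤ |∑ v, P v * (b2r (y v) - p v)| + |∑ v, P v * p v - c| := fun y => by
    simp_rw [mul_sub, sum_sub_distrib]
    exact abs_sub_le _ _ _
  calc ∑ y, bernoulliProdMass p y * |∑ v, P v * b2r (y v) - c|
      ≤ ∑ y, bernoulliProdMass p y * (|∑ v, P v * (b2r (y v) - p v)| + |∑ v, P v * p v - c|) :=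
        sum_le_sum fun y _ => mul_le_mul_of_nonneg_left (triangle y) (bernoulliProdMass_nonneg hp y)
    _ ≤ √(∑ v, P v ^ 2) + |∑ v, P v * p v - c| := by
        simp_rw [mul_add, sum_add_distrib, ← sum_mul, sum_bernoulliProdMass, one_mul]
        gcongr
        exact sum_bernoulliProdMass_mul_abs_linear_le hp P

end BernoulliProduct

section FiniteMeasure

variable {α β : Type*} [Fintype α] [MeasurableSpace α]

lemma isProbabilityMeasure_sum_smul_dirac {w : α → ℝ} (hw : ∀ a, 0 ≤ w a) (hsum : ∑ a, w a = 1) :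
    IsProbabilityMeasure (∑ a, ENNReal.ofReal (w a) • Measure.dirac a) := by
  constructor
  simp [← ENNReal.ofReal_sum_of_nonneg fun a _ => hw a, hsum]

variable [MeasurableSingletonClass α]

lemma integral_sum_smul_dirac {w : α → ℝ} (hw : ∀ a, 0 ≤ w a) (h : α → ℝ) :
    ∫ x, h x ∂(∑ a, ENNReal.ofReal (w a) • Measure.dirac a) = ∑ a, w a * h a := by
  rw [integral_finsetSum_measure fun a _ => Integrable.of_finite.smul_measure ENNReal.ofReal_ne_top]
  simp [integral_smul_measure, ENNReal.toReal_ofReal (hw _)]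

variable [Fintype β] [MeasurableSpace β] [MeasurableSingletonClass β]

lemma integral_bind_of_fintype (μ : Measure α) [IsFiniteMeasure μ] (κ : α → Measure β)
    [∀ a, IsFiniteMeasure (κ a)] (h : β → ℝ) :
    ∫ y, h y ∂μ.bind κ = ∫ x, ∫ y, h y ∂κ x ∂μ := by
  have bind_apply (s : Set β) (hs : MeasurableSet s) : μ.bind κ s = ∑ a, κ a s * μ {a} := by
    rw [Measure.bind_apply hs (measurable_of_finite κ).aemeasurable, lintegral_fintype]
  have : IsFiniteMeasure (μ.bind κ) := ⟨by
    rw [bind_apply _ MeasurableSet.univ]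
    exact ENNReal.sum_lt_top.2 fun a _ =>
      ENNReal.mul_lt_top (measure_lt_top _ _) (measure_lt_top _ _)⟩
  have bind_real (y : β) : (μ.bind κ).real {y} = ∑ a, (κ a).real {y} * μ.real {a} := by
    rw [measureReal_def, bind_apply _ (measurableSet_singleton y), ENNReal.toReal_sum
      fun a _ => ENNReal.mul_ne_top (measure_ne_top _ _) (measure_ne_top _ _)]
    simp [measureReal_def]
  simp_rw [integral_fintype Integrable.of_finite, bind_real, smul_eq_mul, sum_mul, mul_sum]
  rw [sum_comm]
  exact sum_congr rfl fun a _ => sum_congr rfl fun y _ => by ring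

end FiniteMeasure

lemma b2r_mem_Icc (b : Bool) : b2r b ∈ Set.Icc (0 : ℝ) 1 := by
  cases b <;> simp [b2r]

section Occupancy

variable {V : Type} [Fintype V] {G : SimpleGraph V} [DecidableRel G.Adj] {f g : ℝ → ℝ}

/-- The map `Γ` of the deterministic process. -/
def detStep (G : SimpleGraph V) [DecidableRel G.Adj] (f g : ℝ → ℝ) (y : V → ℝ) : V → ℝ :=
  fun v => gam f g (y v) (nbrAvg G y v)

lemma nbrAvg_mem_Icc {y : V → ℝ} (hy : ∀ w, y w ∈ Set.Icc (0 : ℝ) 1) (v : V) :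
    nbrAvg G y v ∈ Set.Icc (0 : ℝ) 1 := by
  have sum_le : ∑ w ∈ G.neighborFinset v, y w ≤ G.degree v := by
    simpa using sum_le_sum fun w (_ : w ∈ G.neighborFinset v) => (hy w).2
  exact ⟨div_nonneg (sum_nonneg fun w _ => (hy w).1) (Nat.cast_nonneg _),
    div_le_one_of_le₀ sum_le (Nat.cast_nonneg _)⟩

lemma gam_mem_Icc (hf : Set.MapsTo f (Set.Icc 0 1) (Set.Icc 0 1))
    (hg : Set.MapsTo g (Set.Icc 0 1) (Set.Icc 0 1)) {a b : ℝ}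
    (ha : a ∈ Set.Icc (0 : ℝ) 1) (hb : b ∈ Set.Icc (0 : ℝ) 1) :
    gam f g a b ∈ Set.Icc (0 : ℝ) 1 := by
  obtain ⟨hf0, hf1⟩ := hf hb
  obtain ⟨hg0, hg1⟩ := hg hb
  obtain ⟨ha0, ha1⟩ := ha
  unfold gam
  constructor <;> nlinarith

lemma detStep_mem_Icc (hf : Set.MapsTo f (Set.Icc 0 1) (Set.Icc 0 1))
    (hg : Set.MapsTo g (Set.Icc 0 1) (Set.Icc 0 1)) {y : V → ℝ}
    (hy : ∀ w, y w ∈ Set.Icc (0 : ℝ) 1) (v : V) : detStep G f g y v ∈ Set.Icc (0 : ℝ) 1 :=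
  gam_mem_Icc hf hg (hy v) (nbrAvg_mem_Icc hy v)

lemma det_mem_Icc (hf : Set.MapsTo f (Set.Icc 0 1) (Set.Icc 0 1))
    (hg : Set.MapsTo g (Set.Icc 0 1) (Set.Icc 0 1)) {x0 : V → ℝ}
    (hx0 : ∀ w, x0 w ∈ Set.Icc (0 : ℝ) 1) (t : ℕ) (v : V) :
    det G f g x0 t v ∈ Set.Icc (0 : ℝ) 1 := by
  induction t generalizing v with
  | zero => exact hx0 v
  | succ t ih => exact detStep_mem_Icc hf hg ih v

lemma abs_gam_sub_gam_sub_le {M : ℝ}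
    (hfLip : ∀ a ∈ Set.Icc (0:ℝ) 1, ∀ b ∈ Set.Icc (0:ℝ) 1, |f a - f b| ≤ M * |a - b|)
    (hgLip : ∀ a ∈ Set.Icc (0:ℝ) 1, ∀ b ∈ Set.Icc (0:ℝ) 1, |g a - g b| ≤ M * |a - b|)
    {a b b' : ℝ} (a' : ℝ) (ha : a ∈ Set.Icc (0 : ℝ) 1)
    (hb : b ∈ Set.Icc (0 : ℝ) 1) (hb' : b' ∈ Set.Icc (0 : ℝ) 1) :
    |gam f g a b - gam f g a' b' - (a - a') * (1 - f b' - g b')| ≤ M * |b - b'| := by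
  obtain ⟨ha0, ha1⟩ := ha
  calc |gam f g a b - gam f g a' b' - (a - a') * (1 - f b' - g b')|
      = |-(a * (f b - f b')) + (1 - a) * (g b - g b')| := by unfold gam; ring_nf
    _ ≤ a * |f b - f b'| + (1 - a) * |g b - g b'| := by
        refine (abs_add_le _ _).trans_eq ?_
        rw [abs_neg, abs_mul, abs_mul, abs_of_nonneg ha0, abs_of_nonneg (sub_nonneg.2 ha1)]
    _ ≤ a * (M * |b - b'|) + (1 - a) * (M * |b - b'|) :=
        add_le_add (mul_le_mul_of_nonneg_left (hfLip b hb b' hb') ha0)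
          (mul_le_mul_of_nonneg_left (hgLip b hb b' hb') (sub_nonneg.2 ha1))
    _ = M * |b - b'| := by ring

lemma abs_linear_detStep_sub_le {M : ℝ}
    (hfLip : ∀ a ∈ Set.Icc (0:ℝ) 1, ∀ b ∈ Set.Icc (0:ℝ) 1, |f a - f b| ≤ M * |a - b|)
    (hgLip : ∀ a ∈ Set.Icc (0:ℝ) 1, ∀ b ∈ Set.Icc (0:ℝ) 1, |g a - g b| ≤ M * |a - b|)
    {y x : V → ℝ} (hy : ∀ w, y w ∈ Set.Icc (0 : ℝ) 1) (hx : ∀ w, x w ∈ Set.Icc (0 : ℝ) 1)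
    (P : V → ℝ) :
    let Q := fun v => P v * (1 - f (nbrAvg G x v) - g (nbrAvg G x v))
    |∑ v, P v * detStep G f g y v - ∑ v, P v * detStep G f g x v|
      ≤ |∑ v, Q v * y v - ∑ v, Q v * x v| + M * ∑ v, |P v| * |nbrAvg G y v - nbrAvg G x v| := by
  intro Q
  set R := fun v => gam f g (y v) (nbrAvg G y v) - gam f g (x v) (nbrAvg G x v)
    - (y v - x v) * (1 - f (nbrAvg G x v) - g (nbrAvg G x v))
  have split : ∑ v, P v * detStep G f g y v - ∑ v, P v * detStep G f g x v
      = (∑ v, Q v * y v - ∑ v, Q v * x v) + ∑ v, P v * R v := by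
    simp only [← sum_sub_distrib, ← sum_add_distrib]
    exact sum_congr rfl fun v _ => by simp only [detStep, Q, R]; ring
  have hR (v : V) : |R v| ≤ M * |nbrAvg G y v - nbrAvg G x v| :=
    abs_gam_sub_gam_sub_le hfLip hgLip (x v) (hy v) (nbrAvg_mem_Icc hy v) (nbrAvg_mem_Icc hx v)
  calc |∑ v, P v * detStep G f g y v - ∑ v, P v * detStep G f g x v|
      ≤ |∑ v, Q v * y v - ∑ v, Q v * x v| + ∑ v, |P v| * |R v| := by
        rw [split]
        refine (abs_add_le _ _).trans (add_le_add le_rfl ?_)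
        simpa only [abs_mul] using abs_sum_le_sum_abs (fun v => P v * R v) univ
    _ ≤ |∑ v, Q v * y v - ∑ v, Q v * x v| + M * ∑ v, |P v| * |nbrAvg G y v - nbrAvg G x v| := by
        rw [mul_sum]
        refine add_le_add le_rfl (sum_le_sum fun v _ => ?_)
        rw [mul_left_comm]
        exact mul_le_mul_of_nonneg_left (hR v) (abs_nonneg _)

variable [DecidableEq V]

lemma stepMeasure_eq (X : V → Bool) :
    stepMeasure G f g X = ∑ y, ENNReal.ofReal
      (bernoulliProdMass (detStep G f g (fun w => b2r (X w))) y) • Measure.dirac y :=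
  rfl

lemma isProbabilityMeasure_stepMeasure (hf : Set.MapsTo f (Set.Icc 0 1) (Set.Icc 0 1))
    (hg : Set.MapsTo g (Set.Icc 0 1) (Set.Icc 0 1)) (X : V → Bool) :
    IsProbabilityMeasure (stepMeasure G f g X) := by
  rw [stepMeasure_eq]
  exact isProbabilityMeasure_sum_smul_dirac
    (bernoulliProdMass_nonneg (detStep_mem_Icc hf hg fun w => b2r_mem_Icc _))
    (sum_bernoulliProdMass _)

lemma isProbabilityMeasure_law (hf : Set.MapsTo f (Set.Icc 0 1) (Set.Icc 0 1))
    (hg : Set.MapsTo g (Set.Icc 0 1) (Set.Icc 0 1)) (x0 : V → Bool) :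
    ∀ t, IsProbabilityMeasure (law G f g x0 t)
  | 0 => by rw [law]; infer_instance
  | t + 1 => by
    have := isProbabilityMeasure_law hf hg x0 t
    exact isProbabilityMeasure_bind (measurable_of_finite _).aemeasurable
      (ae_of_all _ (isProbabilityMeasure_stepMeasure hf hg))

lemma integral_stepMeasure_abs_linear_sub_le (hf : Set.MapsTo f (Set.Icc 0 1) (Set.Icc 0 1))
    (hg : Set.MapsTo g (Set.Icc 0 1) (Set.Icc 0 1)) (X : V → Bool) (P : V → ℝ) (c : ℝ) :
    ∫ y, |∑ v, P v * b2r (y v) - c| ∂stepMeasure G f g X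
      ≤ √(∑ v, P v ^ 2) + |∑ v, P v * detStep G f g (fun w => b2r (X w)) v - c| := by
  have hp := detStep_mem_Icc (G := G) hf hg fun w => b2r_mem_Icc (X w)
  rw [stepMeasure_eq, integral_sum_smul_dirac (bernoulliProdMass_nonneg hp)]
  exact sum_bernoulliProdMass_mul_abs_sub_le hp P c

lemma integral_law_succ_abs_linear_sub_le (hf : Set.MapsTo f (Set.Icc 0 1) (Set.Icc 0 1))
    (hg : Set.MapsTo g (Set.Icc 0 1) (Set.Icc 0 1)) {M : ℝ}
    (hfLip : ∀ a ∈ Set.Icc (0:ℝ) 1, ∀ b ∈ Set.Icc (0:ℝ) 1, |f a - f b| ≤ M * |a - b|)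
    (hgLip : ∀ a ∈ Set.Icc (0:ℝ) 1, ∀ b ∈ Set.Icc (0:ℝ) 1, |g a - g b| ≤ M * |a - b|)
    (x0 : V → Bool) (t : ℕ) (P : V → ℝ) :
    let x := det G f g (fun w => b2r (x0 w)) t
    let Q := fun v => P v * (1 - f (nbrAvg G x v) - g (nbrAvg G x v))
    ∫ y, |∑ v, P v * b2r (y v) - ∑ v, P v * det G f g (fun w => b2r (x0 w)) (t + 1) v|
        ∂law G f g x0 (t + 1)
      ≤ √(∑ v, P v ^ 2) + ∫ y, |∑ v, Q v * b2r (y v) - ∑ v, Q v * x v| ∂law G f g x0 t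
        + M * ∑ v, |P v| *
          ∫ y, |nbrAvg G (fun w => b2r (y w)) v - nbrAvg G x v| ∂law G f g x0 t := by
  intro x Q
  have := isProbabilityMeasure_law (G := G) hf hg x0 t
  have := isProbabilityMeasure_stepMeasure (G := G) hf hg
  have hx := det_mem_Icc (G := G) hf hg (fun w => b2r_mem_Icc (x0 w)) t
  calc ∫ y, |∑ v, P v * b2r (y v) - ∑ v, P v * detStep G f g x v| ∂law G f g x0 (t + 1)
      = ∫ X, ∫ y, |∑ v, P v * b2r (y v) - ∑ v, P v * detStep G f g x v| ∂stepMeasure G f g X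
          ∂law G f g x0 t := integral_bind_of_fintype _ _ _
    _ ≤ ∫ X, (√(∑ v, P v ^ 2) + |∑ v, Q v * b2r (X v) - ∑ v, Q v * x v|
          + M * ∑ v, |P v| * |nbrAvg G (fun w => b2r (X w)) v - nbrAvg G x v|)
          ∂law G f g x0 t := by
        refine integral_mono Integrable.of_finite Integrable.of_finite fun X => ?_
        refine (integral_stepMeasure_abs_linear_sub_le hf hg X P _).trans ?_
        rw [add_assoc]
        exact add_le_add le_rfl
          (abs_linear_detStep_sub_le hfLip hgLip (fun w => b2r_mem_Icc (X w)) hx P)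
    _ = _ := by
        simp [integral_add, integral_finsetSum, integral_const_mul, Integrable.of_finite]

lemma integral_abs_linear_sub_det_le (hf : Set.MapsTo f (Set.Icc 0 1) (Set.Icc 0 1))
    (hg : Set.MapsTo g (Set.Icc 0 1) (Set.Icc 0 1)) {M : ℝ}
    (hfLip : ∀ a ∈ Set.Icc (0:ℝ) 1, ∀ b ∈ Set.Icc (0:ℝ) 1, |f a - f b| ≤ M * |a - b|)
    (hgLip : ∀ a ∈ Set.Icc (0:ℝ) 1, ∀ b ∈ Set.Icc (0:ℝ) 1, |g a - g b| ≤ M * |a - b|)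
    (x0 : V → Bool) (t : ℕ) (P : V → ℝ) :
    ∫ y, |∑ v, P v * b2r (y v) - ∑ v, P v * det G f g (fun w => b2r (x0 w)) t v| ∂law G f g x0 t
      ≤ t * √(∑ v, P v ^ 2) + M * ∑ s ∈ range t, ∑ v, |P v| *
          ∫ y, |nbrAvg G (fun w => b2r (y w)) v
            - nbrAvg G (det G f g (fun w => b2r (x0 w)) s) v| ∂law G f g x0 s := by
  have hM : 0 ≤ M := by simpa using (abs_nonneg _).trans (hfLip 0 (by simp) 1 (by simp))
  induction t generalizing P with
  | zero => simp [law, det]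
  | succ t ih =>
    set x := det G f g (fun w => b2r (x0 w)) t
    set Q := fun v => P v * (1 - f (nbrAvg G x v) - g (nbrAvg G x v))
    have hQ (v : V) : |Q v| ≤ |P v| := by
      have hb := nbrAvg_mem_Icc (G := G)
        (det_mem_Icc (G := G) hf hg (fun w => b2r_mem_Icc (x0 w)) t) v
      obtain ⟨hf0, hf1⟩ := hf hb
      obtain ⟨hg0, hg1⟩ := hg hb
      rw [abs_mul]
      exact mul_le_of_le_one_right (abs_nonneg _) (abs_le.2 ⟨by linarith, by linarith⟩)
    have hsqrt : √(∑ v, Q v ^ 2) ≤ √(∑ v, P v ^ 2) :=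
      Real.sqrt_le_sqrt (sum_le_sum fun v _ => sq_le_sq.2 (hQ v))
    have hdrift : ∑ s ∈ range t, ∑ v, |Q v| *
          ∫ y, |nbrAvg G (fun w => b2r (y w)) v
            - nbrAvg G (det G f g (fun w => b2r (x0 w)) s) v| ∂law G f g x0 s
        ≤ ∑ s ∈ range t, ∑ v, |P v| *
          ∫ y, |nbrAvg G (fun w => b2r (y w)) v
            - nbrAvg G (det G f g (fun w => b2r (x0 w)) s) v| ∂law G f g x0 s :=
      sum_le_sum fun s _ => sum_le_sum fun v _ =>
        mul_le_mul_of_nonneg_right (hQ v) (integral_nonneg fun y => abs_nonneg _)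
    have step := integral_law_succ_abs_linear_sub_le (G := G) hf hg hfLip hgLip x0 t P
    rw [sum_range_succ, mul_add]
    push_cast
    linarith [ih Q, mul_le_mul_of_nonneg_left hsqrt t.cast_nonneg,
      mul_le_mul_of_nonneg_left hdrift hM]

end Occupancy

theorem linear_functional_multi_step_bound_general
    {V : Type} [Fintype V] [DecidableEq V]
    (G : SimpleGraph V) [DecidableRel G.Adj]
    (f g : ℝ → ℝ) (M : ℝ)
    (hf01 : ∀ a ∈ Set.Icc (0:ℝ) 1, f a ∈ Set.Icc (0:ℝ) 1)
    (hg01 : ∀ a ∈ Set.Icc (0:ℝ) 1, g a ∈ Set.Icc (0:ℝ) 1)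
    (hfLip : ∀ a ∈ Set.Icc (0:ℝ) 1, ∀ b ∈ Set.Icc (0:ℝ) 1, |f a - f b| ≤ M * |a - b|)
    (hgLip : ∀ a ∈ Set.Icc (0:ℝ) 1, ∀ b ∈ Set.Icc (0:ℝ) 1, |g a - g b| ≤ M * |a - b|)
    (x0 : V → Bool) (P : V → ℝ) (t : ℕ) :
    ∫ y, |∑ v, P v * b2r (y v) - ∑ v, P v * det G f g (fun w => b2r (x0 w)) t v|
        ∂ (law G f g x0 t)
      ≤ (t : ℝ) * Real.sqrt (∑ v, P v ^ 2)
        + M * ∑ s ∈ Finset.Ico 1 t, ∑ v, |P v| *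
            ∫ y, |nbrAvg G (fun w => b2r (y w)) v
                  - nbrAvg G (det G f g (fun w => b2r (x0 w)) s) v| ∂ (law G f g x0 s) := by
  have key := integral_abs_linear_sub_det_le (G := G) hf01 hg01 hfLip hgLip x0 t P
  have starts_exact : ∑ v, |P v| * ∫ y, |nbrAvg G (fun w => b2r (y w)) v
      - nbrAvg G (det G f g (fun w => b2r (x0 w)) 0) v| ∂law G f g x0 0 = 0 := by
    simp [law, det]
  obtain _ | t := t
  · simpa using key
  · rwa [sum_range_eq_add_Ico _ t.succ_pos, starts_exact, zero_add] at key

/-- **Lemma 2.2**: multi-step bound for a linear functional `P(y) = ∑_v P_v y_v`. -/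
theorem linear_functional_multi_step_bound
    {V : Type} [Fintype V] [DecidableEq V]
    (G : SimpleGraph V) [DecidableRel G.Adj]
    (hdeg : ∀ v : V, 0 < G.degree v)
    (f g : ℝ → ℝ) (M : ℝ)
    (hf01 : ∀ a ∈ Set.Icc (0:ℝ) 1, f a ∈ Set.Icc (0:ℝ) 1)
    (hg01 : ∀ a ∈ Set.Icc (0:ℝ) 1, g a ∈ Set.Icc (0:ℝ) 1)
    (hfLip : ∀ a ∈ Set.Icc (0:ℝ) 1, ∀ b ∈ Set.Icc (0:ℝ) 1, |f a - f b| ≤ M * |a - b|)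
    (hgLip : ∀ a ∈ Set.Icc (0:ℝ) 1, ∀ b ∈ Set.Icc (0:ℝ) 1, |g a - g b| ≤ M * |a - b|)
    (x0 : V → Bool) (P : V → ℝ) (t : ℕ) :
    ∫ y, |∑ v, P v * b2r (y v) - ∑ v, P v * det G f g (fun w => b2r (x0 w)) t v|
        ∂ (law G f g x0 t)
      ≤ (t : ℝ) * Real.sqrt (∑ v, P v ^ 2)
        + M * ∑ s ∈ Finset.Ico 1 t, ∑ v, |P v| *
            ∫ y, |nbrAvg G (fun w => b2r (y w)) v
                  - nbrAvg G (det G f g (fun w => b2r (x0 w)) s) v| ∂ (law G f g x0 s) :=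
  linear_functional_multi_step_bound_general G f g M hf01 hg01 hfLip hgLip x0 P t

end
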